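/- For all real parameters α, β, γ and k ≠ 0, the deformed bracket {·,·}_* on ℝ³ satisfies the Jacobi identity: for all smooth f,g,h: ℝ³ → ℝ, {f,{g,h}_*}_* + {g,{h,f}_*}_* + {h,{f,g}_*}_* = 0; hence {·,·}_* is a Poisson bracket. -/

import Mathlib

/-- The `i`-th partial derivative of `f : ℝⁿ → ℝ` at `v`. -/
noncomputable def pd {n : ℕ} (i : Fin n) (f : (Fin n → ℝ) → ℝ) (v : Fin n → ℝ) : ℝ :=
  fderiv ℝ f v (Pi.single i 1)

/-- The deformed bracket on `ℝ³` with coordinates `(x,y,z) = (v 0, v 1, v 2)`: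
`{f,g}_* = αx(∂_y f ∂_z g − ∂_z f ∂_y g) + βy(∂_z f ∂_x g − ∂_x f ∂_z g)
         + (γ sinh(kz)/k)(∂_x f ∂_y g − ∂_y f ∂_x g)`,
so `{y,z}_* = αx`, `{z,x}_* = βy`, `{x,y}_* = γ sinh(kz)/k`. -/
noncomputable def defBr (α β γ k : ℝ) (f g : (Fin 3 → ℝ) → ℝ) (v : Fin 3 → ℝ) : ℝ :=
  α * v 0 * (pd 1 f v * pd 2 g v - pd 2 f v * pd 1 g v)
  + β * v 1 * (pd 2 f v * pd 0 g v - pd 0 f v * pd 2 g v)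
  + (γ * Real.sinh (k * v 2) / k) * (pd 0 f v * pd 1 g v - pd 1 f v * pd 0 g v)

section lemmas
variable {n : ℕ} {i : Fin n} {f g : (Fin n → ℝ) → ℝ} {v : Fin n → ℝ}

@[fun_prop]
lemma pd_differentiable (i : Fin n) (hf : ContDiff ℝ (⊤ : ℕ∞) f) : Differentiable ℝ (pd i f) :=
  (((hf.fderiv_right (WithTop.coe_le_coe.mpr le_top)).clm_apply contDiff_const).differentiable one_ne_zero)

lemma pd_comm (i j : Fin n) (hf : ContDiff ℝ (⊤ : ℕ∞) f) (v : Fin n → ℝ) :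
    pd i (pd j f) v = pd j (pd i f) v := by
  have hsym : IsSymmSndFDerivAt ℝ f v := hf.contDiffAt.isSymmSndFDerivAt (by simp only [minSmoothness_of_isRCLikeNormedField]; exact WithTop.coe_le_coe.mpr (le_top : (2:ℕ∞) ≤ ⊤))
  have hd : DifferentiableAt ℝ (fderiv ℝ f) v :=
    ((hf.fderiv_right (WithTop.coe_le_coe.mpr le_top)).differentiable one_ne_zero).differentiableAt
  have key : ∀ a b : Fin n,
      pd a (pd b f) v = fderiv ℝ (fderiv ℝ f) v (Pi.single a 1) (Pi.single b 1) := by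
    intro a b
    show fderiv ℝ (fun w => fderiv ℝ f w (Pi.single b 1)) v (Pi.single a 1) = _
    rw [fderiv_clm_apply hd (differentiableAt_const _)]
    simp
  rw [key, key, hsym.eq]

lemma pd_add (hf : DifferentiableAt ℝ f v) (hg : DifferentiableAt ℝ g v) :
    pd i (fun w => f w + g w) v = pd i f v + pd i g v := by
  simp [pd, fderiv_fun_add hf hg]

lemma pd_sub (hf : DifferentiableAt ℝ f v) (hg : DifferentiableAt ℝ g v) :
    pd i (fun w => f w - g w) v = pd i f v - pd i g v := by
  simp [pd, fderiv_fun_sub hf hg]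

lemma pd_mul (hf : DifferentiableAt ℝ f v) (hg : DifferentiableAt ℝ g v) :
    pd i (fun w => f w * g w) v = pd i f v * g v + f v * pd i g v := by
  simp [pd, fderiv_fun_mul hf hg]; ring

lemma pd_const (c : ℝ) : pd i (fun _ => c) v = 0 := by
  simp [pd]

lemma pd_coord (j : Fin n) : pd i (fun w => w j) v = (Pi.single i 1 : Fin n → ℝ) j := by
  have : fderiv ℝ (fun w : Fin n → ℝ => w j) v = ContinuousLinearMap.proj j :=
    (ContinuousLinearMap.proj j : (Fin n → ℝ) →L[ℝ] ℝ).fderiv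
  simp [pd, this]

lemma pd_const_mul (c : ℝ) (hf : DifferentiableAt ℝ f v) :
    pd i (fun w => c * f w) v = c * pd i f v := by
  simp [pd, fderiv_const_mul hf]

lemma pd_div_const (c : ℝ) (hf : DifferentiableAt ℝ f v) :
    pd i (fun w => f w / c) v = pd i f v / c := by
  simp [pd, div_eq_mul_inv, fderiv_mul_const hf]; ring

lemma pd_sinh (k : ℝ) {i : Fin 3} {v : Fin 3 → ℝ} :
    pd i (fun w : Fin 3 → ℝ => Real.sinh (k * w 2)) v
      = Real.cosh (k * v 2) * (k * (Pi.single i 1 : Fin 3 → ℝ) 2) := by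
  have h2 : HasFDerivAt (fun w : Fin 3 → ℝ => k * w 2)
      (k • (ContinuousLinearMap.proj 2 : (Fin 3 → ℝ) →L[ℝ] ℝ)) v :=
    ((ContinuousLinearMap.proj 2 : (Fin 3 → ℝ) →L[ℝ] ℝ).hasFDerivAt).const_mul k
  have h : HasFDerivAt (fun w : Fin 3 → ℝ => Real.sinh (k * w 2))
      (Real.cosh (k * v 2) • (k • (ContinuousLinearMap.proj 2 : (Fin 3 → ℝ) →L[ℝ] ℝ))) v :=
    by have := (Real.hasDerivAt_sinh (k * v 2)).comp_hasFDerivAt v h2; exact this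
  simp [pd, h.fderiv]

end lemmas

lemma sing00 : (Pi.single (0:Fin 3) (1:ℝ) : Fin 3 → ℝ) 0 = 1 := Pi.single_eq_same _ _
lemma sing01 : (Pi.single (0:Fin 3) (1:ℝ) : Fin 3 → ℝ) 1 = 0 := Pi.single_eq_of_ne (by decide) _
lemma sing02 : (Pi.single (0:Fin 3) (1:ℝ) : Fin 3 → ℝ) 2 = 0 := Pi.single_eq_of_ne (by decide) _
lemma sing10 : (Pi.single (1:Fin 3) (1:ℝ) : Fin 3 → ℝ) 0 = 0 := Pi.single_eq_of_ne (by decide) _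
lemma sing11 : (Pi.single (1:Fin 3) (1:ℝ) : Fin 3 → ℝ) 1 = 1 := Pi.single_eq_same _ _
lemma sing12 : (Pi.single (1:Fin 3) (1:ℝ) : Fin 3 → ℝ) 2 = 0 := Pi.single_eq_of_ne (by decide) _
lemma sing20 : (Pi.single (2:Fin 3) (1:ℝ) : Fin 3 → ℝ) 0 = 0 := Pi.single_eq_of_ne (by decide) _
lemma sing21 : (Pi.single (2:Fin 3) (1:ℝ) : Fin 3 → ℝ) 1 = 0 := Pi.single_eq_of_ne (by decide) _
lemma sing22 : (Pi.single (2:Fin 3) (1:ℝ) : Fin 3 → ℝ) 2 = 1 := Pi.single_eq_same _ _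

lemma defBr_eq (α β γ k : ℝ) (f g : (Fin 3 → ℝ) → ℝ) :
    defBr α β γ k f g = fun v =>
      α * v 0 * (pd 1 f v * pd 2 g v - pd 2 f v * pd 1 g v)
      + β * v 1 * (pd 2 f v * pd 0 g v - pd 0 f v * pd 2 g v)
      + (γ * Real.sinh (k * v 2) / k) * (pd 0 f v * pd 1 g v - pd 1 f v * pd 0 g v) := rfl


set_option maxHeartbeats 2000000 in
/-- The deformed bracket satisfies the Jacobi identity, hence is a Poisson bracket. -/
theorem deformed_bracket_jacobi (α β γ k : ℝ) (hk : k ≠ 0) :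
    ∀ f g h : (Fin 3 → ℝ) → ℝ, ContDiff ℝ (⊤ : ℕ∞) f → ContDiff ℝ (⊤ : ℕ∞) g → ContDiff ℝ (⊤ : ℕ∞) h →
      defBr α β γ k f (defBr α β γ k g h)
      + defBr α β γ k g (defBr α β γ k h f)
      + defBr α β γ k h (defBr α β γ k f g) = 0 := by
  intro f g h hf hg hh
  funext v
  simp only [Pi.add_apply, Pi.zero_apply, defBr_eq]
  simp (disch := fun_prop) only [pd_add, pd_sub, pd_mul, pd_const_mul, pd_div_const,
    pd_coord, pd_sinh, pd_const]
  simp only [sing00, sing01, sing02, sing10, sing11, sing12, sing20, sing21, sing22,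
    mul_zero, zero_mul, mul_one, add_zero, zero_add]
  simp only [pd_comm 1 0 hf v,
    pd_comm 2 0 hf v,
    pd_comm 2 1 hf v,
    pd_comm 1 0 hg v,
    pd_comm 2 0 hg v,
    pd_comm 2 1 hg v,
    pd_comm 1 0 hh v,
    pd_comm 2 0 hh v,
    pd_comm 2 1 hh v]
  field_simp
  ring
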